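/- arXiv:2406.09852 — 2 statements merged into one kernel-verified Lean document; each statement's English description precedes it below -/
import Mathlib

section
/- Let A ∈ ℝ_{≥0}^{p×p} be lower triangular with diagonal entries 1, C := A − I_p, and for i ∈ {1,…,p} define η_i := max{ m ∈ {1,…,p} : there exists j ∈ {1,…,p} with (C^{m−1})_{i,j} > 0 }. If (C^m)_{i,j} > 0 for some i, j ∈ {1,…,p} and m ∈ {0,1,…,p−1}, then η_i ≥ η_j + m. -/
/-!
Write `C = A - 1`, which is entrywise nonnegative and strictly lower triangular. Nonnegativity lets
positive entries compose: `(C ^ m) i j > 0` and `(C ^ (k - 1)) j l > 0` give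
`(C ^ (m + k - 1)) i l > 0`. Strict triangularity gives `(C ^ q) a b ≠ 0 → b + q ≤ a`, so this
exponent still satisfies `m + k ≤ p`. Taking `k = η j`, the index `m + η j` therefore lies in the
set whose supremum is `η i`.
-/

namespace Matrix

variable {n R : Type*}

lemma sub_one_apply_nonneg [DecidableEq n] [Ring R] [PartialOrder R] [IsOrderedAddMonoid R]
    {A : Matrix n n R} (hnonneg : ∀ a b, 0 ≤ A a b)
    (hdiag : ∀ a, A a a = 1) (a b : n) : 0 ≤ (A - 1) a b := by
  rcases eq_or_ne a b with rfl | hab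
  · simp [hdiag]
  · simp [one_apply_ne hab, hnonneg a b]

lemma sub_one_apply_eq_zero_of_le [DecidableEq n] [LinearOrder n] [Ring R]
    {A : Matrix n n R} (hlow : ∀ a b, a < b → A a b = 0) (hdiag : ∀ a, A a a = 1) (a b : n)
    (hab : a ≤ b) : (A - 1) a b = 0 := by
  rcases hab.lt_or_eq with hab | rfl
  · simp [one_apply_ne hab.ne, hlow a b hab]
  · simp [hdiag]

lemma add_le_of_pow_apply_ne_zero [Semiring R] {p : ℕ} {C : Matrix (Fin p) (Fin p) R}
    (hC : ∀ a b, a ≤ b → C a b = 0) (q : ℕ) {a b : Fin p} (hab : (C ^ q) a b ≠ 0) :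
    (b : ℕ) + q ≤ a := by
  induction q generalizing b with
  | zero =>
    rw [pow_zero] at hab
    obtain rfl : a = b := by_contra fun h => hab (one_apply_ne h)
    simp
  | succ q ih =>
    rw [pow_succ, mul_apply] at hab
    obtain ⟨k, -, hk⟩ := Finset.exists_ne_zero_of_sum_ne_zero hab
    have hbk : b < k := lt_of_not_ge fun hkb => right_ne_zero_of_mul hk (hC k b hkb)
    have hak := ih (left_ne_zero_of_mul hk)
    omega

section Nonneg

variable [Fintype n] [Semiring R] [PartialOrder R] [IsStrictOrderedRing R]

lemma mul_apply_pos_of_nonneg {A B : Matrix n n R}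
    (hA : ∀ a b, 0 ≤ A a b) (hB : ∀ a b, 0 ≤ B a b) {i k j : n}
    (hik : 0 < A i k) (hkj : 0 < B k j) : 0 < (A * B) i j :=
  Finset.sum_pos' (fun t _ => mul_nonneg (hA i t) (hB t j)) ⟨k, Finset.mem_univ k, mul_pos hik hkj⟩

lemma pow_add_apply_pos_of_nonneg [DecidableEq n] {C : Matrix n n R}
    (hC : ∀ a b, 0 ≤ C a b) {q r : ℕ} {i k j : n}
    (hik : 0 < (C ^ q) i k) (hkj : 0 < (C ^ r) k j) : 0 < (C ^ (q + r)) i j := by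
  rw [pow_add]
  exact mul_apply_pos_of_nonneg (pow_apply_nonneg hC q) (pow_apply_nonneg hC r) hik hkj

end Nonneg

end Matrix

section EtaSet

variable {R : Type*} [Semiring R] [PartialOrder R] {p : ℕ}

/-- `sSup (etaSet (A - 1) i)` is the paper's `η_i`. -/
def etaSet (C : Matrix (Fin p) (Fin p) R) (i : Fin p) : Set ℕ :=
  {m | m ∈ Finset.Icc 1 p ∧ ∃ j, 0 < (C ^ (m - 1)) i j}

lemma etaSet_bddAbove (C : Matrix (Fin p) (Fin p) R) (i : Fin p) : BddAbove (etaSet C i) :=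
  (Finset.Icc 1 p).bddAbove.mono fun _ hm => hm.1

lemma one_mem_etaSet [IsStrictOrderedRing R] (C : Matrix (Fin p) (Fin p) R)
    (i : Fin p) : 1 ∈ etaSet C i :=
  ⟨Finset.mem_Icc.2 ⟨le_rfl, i.pos⟩, i, by simp⟩

lemma sSup_etaSet_mem [IsStrictOrderedRing R] (C : Matrix (Fin p) (Fin p) R)
    (i : Fin p) : sSup (etaSet C i) ∈ etaSet C i :=
  Nat.sSup_mem ⟨1, one_mem_etaSet C i⟩ (etaSet_bddAbove C i)

lemma add_mem_etaSet [IsStrictOrderedRing R] {C : Matrix (Fin p) (Fin p) R}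
    (hnonneg : ∀ a b, 0 ≤ C a b) (hlow : ∀ a b, a ≤ b → C a b = 0) {i j : Fin p} {m k : ℕ}
    (hij : 0 < (C ^ m) i j) (hk : k ∈ etaSet C j) : m + k ∈ etaSet C i := by
  obtain ⟨hk, l, hjl⟩ := hk
  have hil := Matrix.pow_add_apply_pos_of_nonneg hnonneg hij hjl
  have hbound := Matrix.add_le_of_pow_apply_ne_zero hlow _ hil.ne'
  have hk_pos := (Finset.mem_Icc.1 hk).1
  refine ⟨Finset.mem_Icc.2 ⟨by omega, by omega⟩, l, ?_⟩
  rwa [show m + k - 1 = m + (k - 1) by omega]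

end EtaSet

theorem eta_ineq_general (p : ℕ) (A : Matrix (Fin p) (Fin p) ℝ)
    (hnonneg : ∀ i j : Fin p, 0 ≤ A i j)
    (hlow : ∀ i j : Fin p, i < j → A i j = 0)
    (hdiag : ∀ i : Fin p, A i i = 1)
    (η : Fin p → ℕ)
    (hη : ∀ i : Fin p,
      η i = sSup {m : ℕ | m ∈ Finset.Icc 1 p ∧ ∃ j : Fin p, 0 < ((A - 1) ^ (m - 1)) i j})
    (i j : Fin p) (m : ℕ)
    (h : 0 < ((A - 1) ^ m) i j) :
    η j + m ≤ η i := by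
  have hη : ∀ a, η a = sSup (etaSet (A - 1) a) := hη
  have hmem : m + η j ∈ etaSet (A - 1) i :=
    add_mem_etaSet (Matrix.sub_one_apply_nonneg hnonneg hdiag)
      (Matrix.sub_one_apply_eq_zero_of_le hlow hdiag) h (hη j ▸ sSup_etaSet_mem _ j)
  rw [add_comm, hη i]
  exact le_csSup (etaSet_bddAbove _ i) hmem

/-- If `A` is a nonnegative `p × p` lower triangular real matrix with unit diagonal,
`C = A - I`, and `η_i = max{ m ∈ {1,…,p} : ∃ j, (C^(m-1))_{i,j} > 0 }`, then
`(C^m)_{i,j} > 0` for some `m ∈ {0,…,p-1}` implies `η_i ≥ η_j + m`. -/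
theorem eta_ineq (p : ℕ) (A : Matrix (Fin p) (Fin p) ℝ)
    (hnonneg : ∀ i j : Fin p, 0 ≤ A i j)
    (hlow : ∀ i j : Fin p, i < j → A i j = 0)
    (hdiag : ∀ i : Fin p, A i i = 1)
    (η : Fin p → ℕ)
    (hη : ∀ i : Fin p,
      η i = sSup {m : ℕ | m ∈ Finset.Icc 1 p ∧ ∃ j : Fin p, 0 < ((A - 1) ^ (m - 1)) i j})
    (i j : Fin p) (m : ℕ) (hm : m ≤ p - 1)
    (h : 0 < ((A - 1) ^ m) i j) :
    η j + m ≤ η i :=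
  eta_ineq_general p A hnonneg hlow hdiag η hη i j m h
end

section
/- Let (X_k)_{k≥0} be a strongly critical p-type GWI process with X₀ = 0, finite second moments, lower triangular offspring mean matrix A with unit diagonal whose all first-subdiagonal entries a_{j+1,j} are positive, and let r_i := min{ r ≤ i : b_r > 0 } ∨ 1. Then E(X_{k,i}) = b_{r_i} · ((A−I_p)^{i−r_i})_{i,r_i} · C(k, i−r_i+1) + O(k^{i−r_i}) as k → ∞. -/
/-!
Wald's identity, applied to each generation conditionally on the past, turns the branching
recursion into the linear recursion `m_{k+1} = A m_k + b` for the mean vector, so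
`E X_k = ∑_{j<k} A^j b = ∑_{m<k} C(k, m+1) (A - I)^m b`. The matrix `A - I` is strictly lower
triangular, so `((A - I)^m b)_i` vanishes as soon as `m > i - r_i` (as `b` vanishes below `r_i`),
and for `m = i - r_i` only the entry `(i, r_i)` contributes. The terms with `m < i - r_i` are
`O(k^{i - r_i})`.
-/

open MeasureTheory ProbabilityTheory

/-- The `p`-type Galton–Watson process with immigration started from `0`:
`X_k = ∑_{i=1}^p ∑_{j=1}^{X_{k-1,i}} ξ_{k,j,i} + ε_k`. -/
def gwiX {Ω : Type*} (p : ℕ) (ξ : ℕ → ℕ → Fin p → Ω → (Fin p → ℕ))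
    (ε : ℕ → Ω → (Fin p → ℕ)) : ℕ → Ω → (Fin p → ℕ)
  | 0 => fun _ _ => 0
  | k + 1 => fun ω t =>
      (∑ i : Fin p, ∑ j ∈ Finset.range (gwiX p ξ ε k ω i), ξ (k + 1) (j + 1) i ω t)
        + ε (k + 1) ω t

open scoped ENNReal Matrix
open Finset

section Wald

variable {Ω : Type*} [MeasurableSpace Ω]

theorem Measurable.sum_range_of_measurable {M : Type*} [AddCommMonoid M] [MeasurableSpace M]
    [MeasurableAdd₂ M] {N : Ω → ℕ} (hN : Measurable N) {g : ℕ → Ω → M}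
    (hg : ∀ j, Measurable (g j)) : Measurable fun ω => ∑ j ∈ range (N ω), g j ω :=
  (measurable_from_prod_countable_left (f := fun q : Ω × ℕ => ∑ j ∈ range q.2, g j q.1)
    fun n => Finset.measurable_sum (range n) fun j _ => hg j).comp (measurable_id.prodMk hN)

theorem lintegral_sum_range_eq_tsum {μ : Measure Ω} {N : Ω → ℕ} (hN : Measurable N)
    {Y : ℕ → Ω → ℝ≥0∞} (hY : ∀ j, Measurable (Y j)) :
    ∫⁻ ω, ∑ j ∈ range (N ω), Y j ω ∂μ = ∑' j, ∫⁻ ω, {ω | j < N ω}.indicator (Y j) ω ∂μ := by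
  have hset : ∀ j, MeasurableSet {ω | j < N ω} := fun j => hN (measurableSet_Ioi (a := j))
  rw [← lintegral_tsum fun j => ((hY j).indicator (hset j)).aemeasurable]
  refine lintegral_congr fun ω => ?_
  rw [sum_eq_tsum_indicator, coe_range]
  rfl

/-- Wald's identity. -/
theorem lintegral_sum_range_of_indepFun {μ : Measure Ω} {N : Ω → ℕ} {Y : ℕ → Ω → ℝ≥0∞}
    {c : ℝ≥0∞} (hN : Measurable N) (hY : ∀ j, Measurable (Y j))
    (hindep : ∀ j, IndepFun N (Y j) μ) (hc : ∀ j, ∫⁻ ω, Y j ω ∂μ = c) :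
    ∫⁻ ω, ∑ j ∈ range (N ω), Y j ω ∂μ = c * ∫⁻ ω, (N ω : ℝ≥0∞) ∂μ := by
  have hind : ∀ j, Measurable ({n : ℕ | j < n}.indicator (1 : ℕ → ℝ≥0∞)) :=
    fun _ => measurable_from_nat
  have hterm : ∀ j, ∫⁻ ω, {ω | j < N ω}.indicator (Y j) ω ∂μ
      = c * ∫⁻ ω, {ω | j < N ω}.indicator 1 ω ∂μ := fun j => by
    have h := lintegral_mul_eq_lintegral_mul_lintegral_of_indepFun ((hind j).comp hN) (hY j)
      ((hindep j).comp (hind j) measurable_id)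
    rw [mul_comm c, ← hc j, show {ω | j < N ω}.indicator (1 : Ω → ℝ≥0∞)
      = {n : ℕ | j < n}.indicator 1 ∘ N from rfl, ← h]
    refine lintegral_congr fun ω => ?_
    by_cases hj : j < N ω <;> simp [hj]
  calc ∫⁻ ω, ∑ j ∈ range (N ω), Y j ω ∂μ
      = ∑' j, c * ∫⁻ ω, {ω | j < N ω}.indicator 1 ω ∂μ := by
        rw [lintegral_sum_range_eq_tsum hN hY]
        exact tsum_congr hterm
    _ = c * ∫⁻ ω, ∑ j ∈ range (N ω), (1 : ℕ → Ω → ℝ≥0∞) j ω ∂μ := by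
        rw [ENNReal.tsum_mul_left,
          lintegral_sum_range_eq_tsum (Y := 1) hN fun _ => measurable_const]
        rfl
    _ = c * ∫⁻ ω, (N ω : ℝ≥0∞) ∂μ := by simp

end Wald

section NatValued

variable {Ω : Type*} [MeasurableSpace Ω] {μ : Measure Ω} {f : Ω → ℕ}

theorem integrable_natCast_of_integrable_sq (hf : Measurable f)
    (hf2 : Integrable (fun ω => (f ω : ℝ) ^ 2) μ) : Integrable (fun ω => (f ω : ℝ)) μ :=
  hf2.mono (measurable_from_nat.comp hf).aestronglyMeasurable <| ae_of_all _ fun ω => by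
    simp only [Real.norm_eq_abs, abs_pow, Nat.abs_cast]
    exact_mod_cast Nat.le_self_pow two_ne_zero _

theorem ofReal_integral_natCast (hf : Integrable (fun ω => (f ω : ℝ)) μ) :
    ENNReal.ofReal (∫ ω, (f ω : ℝ) ∂μ) = ∫⁻ ω, (f ω : ℝ≥0∞) ∂μ := by
  simp_rw [ofReal_integral_eq_lintegral_ofReal hf (ae_of_all _ fun _ => Nat.cast_nonneg _),
    ENNReal.ofReal_natCast]

theorem integral_natCast_eq_toReal_lintegral (hf : Measurable f) :
    ∫ ω, (f ω : ℝ) ∂μ = (∫⁻ ω, (f ω : ℝ≥0∞) ∂μ).toReal := by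
  simp_rw [integral_eq_lintegral_of_nonneg_ae (ae_of_all _ fun _ => Nat.cast_nonneg _)
    (measurable_from_nat.comp hf).aestronglyMeasurable, ENNReal.ofReal_natCast]

end NatValued

theorem sum_range_add_one_pow {R : Type*} [Semiring R] (x : R) (k : ℕ) :
    ∑ j ∈ range k, (x + 1) ^ j = ∑ m ∈ range k, k.choose (m + 1) • x ^ m := by
  induction k with
  | zero => simp
  | succ k ih =>
    have hext : ∑ m ∈ range k, k.choose (m + 1) • x ^ m
        = ∑ m ∈ range (k + 1), k.choose (m + 1) • x ^ m := by
      rw [sum_range_succ, Nat.choose_succ_self, zero_smul, add_zero]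
    rw [sum_range_succ, ih, hext, (Commute.one_right x).add_pow, ← sum_add_distrib]
    refine sum_congr rfl fun m _ => ?_
    rw [one_pow, mul_one, ← nsmul_eq_mul', Nat.choose_succ_succ, add_smul, add_comm]

section GeomSum

open Matrix

variable {ι : Type*} [Fintype ι] [DecidableEq ι]

theorem Matrix.geom_sum_succ_mulVec {R : Type*} [Semiring R] (A : Matrix ι ι R) (b : ι → R)
    (k : ℕ) :
    (∑ j ∈ range (k + 1), A ^ j) *ᵥ b = A *ᵥ ((∑ j ∈ range k, A ^ j) *ᵥ b) + b := by
  rw [geom_sum_succ, add_mulVec, one_mulVec, mulVec_mulVec]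

theorem Matrix.geom_sum_mulVec_nonneg {A : Matrix ι ι ℝ} {b : ι → ℝ} (hA : ∀ t i, 0 ≤ A t i)
    (hb : ∀ t, 0 ≤ b t) (k : ℕ) (t : ι) : 0 ≤ ((∑ j ∈ range k, A ^ j) *ᵥ b) t := by
  induction k generalizing t with
  | zero => simp
  | succ k ih =>
    rw [geom_sum_succ_mulVec, Pi.add_apply]
    exact add_nonneg (sum_nonneg fun i _ => mul_nonneg (hA t i) (ih i)) (hb t)

theorem eq_ofReal_geom_sum_mulVec_of_rec {A : Matrix ι ι ℝ} {b : ι → ℝ}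
    (hA : ∀ t i, 0 ≤ A t i) (hb : ∀ t, 0 ≤ b t) {L : ℕ → ι → ℝ≥0∞} (h0 : ∀ t, L 0 t = 0)
    (hsucc : ∀ k t, L (k + 1) t = ∑ i, ENNReal.ofReal (A t i) * L k i + ENNReal.ofReal (b t))
    (k : ℕ) (t : ι) : L k t = ENNReal.ofReal (((∑ j ∈ range k, A ^ j) *ᵥ b) t) := by
  induction k generalizing t with
  | zero => simp [h0]
  | succ k ih =>
    have hterm : ∀ i, 0 ≤ A t i * ((∑ j ∈ range k, A ^ j) *ᵥ b) i :=
      fun i => mul_nonneg (hA t i) (geom_sum_mulVec_nonneg hA hb k i)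
    rw [hsucc, geom_sum_succ_mulVec, Pi.add_apply, mulVec, dotProduct,
      ENNReal.ofReal_add (sum_nonneg fun i _ => hterm i) (hb t),
      ENNReal.ofReal_sum_of_nonneg fun i _ => hterm i]
    simp only [ih, ENNReal.ofReal_mul (hA t _)]

theorem Matrix.geom_sum_mulVec_apply_eq_sum_choose {R : Type*} [Ring R] (A : Matrix ι ι R)
    (b : ι → R) (k : ℕ) (i : ι) :
    ((∑ j ∈ range k, A ^ j) *ᵥ b) i
      = ∑ m ∈ range k, (k.choose (m + 1) : R) * ((A - 1) ^ m *ᵥ b) i := by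
  have hgeom : ∑ j ∈ range k, A ^ j = ∑ m ∈ range k, k.choose (m + 1) • (A - 1) ^ m := by
    simpa using sum_range_add_one_pow (A - 1) k
  rw [hgeom, sum_mulVec, Finset.sum_apply]
  refine sum_congr rfl fun m _ => ?_
  rw [smul_mulVec, Pi.smul_apply, nsmul_eq_mul]

end GeomSum

section LowerTriangular

variable {R : Type*} [Semiring R] {p : ℕ} {N : Matrix (Fin p) (Fin p) R}

theorem Matrix.pow_apply_eq_zero_of_lt_add (hN : ∀ t i, t ≤ i → N t i = 0) (m : ℕ)
    {t i : Fin p} (h : (t : ℕ) < i + m) : (N ^ m) t i = 0 := by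
  induction m generalizing t with
  | zero => exact Matrix.one_apply_ne (Fin.ne_of_lt h)
  | succ m ih =>
    rw [pow_succ', Matrix.mul_apply]
    refine sum_eq_zero fun s _ => ?_
    rcases le_or_gt t s with hts | hst
    · rw [hN t s hts, zero_mul]
    · rw [ih (by omega), mul_zero]

theorem Matrix.pow_mulVec_apply_eq_zero (hN : ∀ t i, t ≤ i → N t i = 0) {b : Fin p → R}
    {r i : Fin p} (hb : ∀ q < r, b q = 0) {m : ℕ} (hm : (i : ℕ) < r + m) :
    (N ^ m *ᵥ b) i = 0 := by
  rw [Matrix.mulVec, dotProduct]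
  refine sum_eq_zero fun q _ => ?_
  rcases lt_or_ge q r with hqr | hrq
  · rw [hb q hqr, mul_zero]
  · rw [pow_apply_eq_zero_of_lt_add hN m (by omega), zero_mul]

theorem Matrix.pow_sub_mulVec_apply (hN : ∀ t i, t ≤ i → N t i = 0) {b : Fin p → R}
    {r i : Fin p} (hb : ∀ q < r, b q = 0) :
    (N ^ ((i : ℕ) - r) *ᵥ b) i = (N ^ ((i : ℕ) - r)) i r * b r := by
  rw [Matrix.mulVec, dotProduct]
  refine sum_eq_single r (fun q _ hqr => ?_) fun h => absurd (mem_univ r) h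
  rcases lt_or_gt_of_ne hqr with hlt | hgt
  · rw [hb q hlt, mul_zero]
  · rw [pow_apply_eq_zero_of_lt_add hN _ (by omega), zero_mul]

end LowerTriangular

theorem Matrix.sub_one_apply_eq_zero_of_le_s15 {R : Type*} [Ring R] {p : ℕ}
    {A : Matrix (Fin p) (Fin p) R} (hlow : ∀ t i, t < i → A t i = 0) (hdiag : ∀ i, A i i = 1)
    {t i : Fin p} (hti : t ≤ i) : (A - 1) t i = 0 := by
  rcases hti.lt_or_eq with h | rfl
  · simp [hlow t i h, Matrix.one_apply_ne h.ne]
  · simp [hdiag]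

section GWI

variable {Ω : Type*} {p : ℕ} {ξ : ℕ → ℕ → Fin p → Ω → (Fin p → ℕ)} {ε : ℕ → Ω → (Fin p → ℕ)}

theorem measurable_gwiX {m : MeasurableSpace Ω} {K : ℕ}
    (hξ : ∀ k ≤ K, ∀ j i, Measurable (ξ k j i)) (hε : ∀ k ≤ K, Measurable (ε k)) :
    Measurable (gwiX p ξ ε K) := by
  induction K with
  | zero => exact measurable_const
  | succ K ih =>
    have hX := ih (fun k hk => hξ k (hk.trans K.le_succ)) (fun k hk => hε k (hk.trans K.le_succ))
    refine measurable_pi_iff.mpr fun t => ?_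
    refine (Finset.measurable_sum _ fun i _ => ?_).add ((measurable_pi_apply t).comp (hε _ le_rfl))
    exact ((measurable_pi_apply i).comp hX).sum_range_of_measurable
      fun j => (measurable_pi_apply t).comp (hξ _ le_rfl _ _)

theorem indepFun_gwiX_offspring [mΩ : MeasurableSpace Ω] {μ : Measure Ω}
    (hξmeas : ∀ k j i, Measurable (ξ k j i)) (hεmeas : ∀ k, Measurable (ε k))
    (hindep : iIndepFun (Sum.elim (fun q : ℕ × ℕ × Fin p => ξ q.1 q.2.1 q.2.2) ε) μ)
    (k j : ℕ) (i : Fin p) :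
    IndepFun (gwiX p ξ ε k) (ξ (k + 1) j i) μ := by
  let f := Sum.elim (fun q : ℕ × ℕ × Fin p => ξ q.1 q.2.1 q.2.2) ε
  let past : Set ((ℕ × ℕ × Fin p) ⊕ ℕ) := {x | Sum.elim (fun q => q.1 ≤ k) (· ≤ k) x}
  let σ : (ℕ × ℕ × Fin p) ⊕ ℕ → MeasurableSpace Ω := fun x =>
    MeasurableSpace.comap (f x) inferInstance
  have hle : ∀ x, σ x ≤ mΩ
    | .inl q => (hξmeas q.1 q.2.1 q.2.2).comap_le
    | .inr n => (hεmeas n).comap_le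
  rw [IndepFun_iff_Indep]
  refine indep_of_indep_of_le_left (indep_of_indep_of_le_right
    (indep_biSup_compl hle hindep.iIndep past) ?_) ?_
  · exact le_iSup₂ (f := fun x (_ : x ∈ pastᶜ) => σ x) (Sum.inl (k + 1, j, i)) (by simp [past])
  · refine (measurable_gwiX (m := ⨆ y ∈ past, σ y) (fun k' hk' j' i' => ?_)
      fun k' hk' => ?_).comap_le
    · exact Measurable.of_comap_le
        (le_iSup₂ (f := fun x (_ : x ∈ past) => σ x) (Sum.inl (k', j', i')) (by simpa [past]))
    · exact Measurable.of_comap_le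
        (le_iSup₂ (f := fun x (_ : x ∈ past) => σ x) (Sum.inr k') (by simpa [past]))

theorem lintegral_gwiX_succ [MeasurableSpace Ω] {μ : Measure Ω}
    (hξmeas : ∀ k j i, Measurable (ξ k j i)) (hεmeas : ∀ k, Measurable (ε k))
    (hindep : iIndepFun (Sum.elim (fun q : ℕ × ℕ × Fin p => ξ q.1 q.2.1 q.2.2) ε) μ)
    (hξid : ∀ k j i, IdentDistrib (ξ k j i) (ξ 1 1 i) μ μ)
    (hεid : ∀ k, IdentDistrib (ε k) (ε 1) μ μ) (k : ℕ) (t : Fin p) :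
    ∫⁻ ω, (gwiX p ξ ε (k + 1) ω t : ℝ≥0∞) ∂μ
      = ∑ i, (∫⁻ ω, (ξ 1 1 i ω t : ℝ≥0∞) ∂μ) * ∫⁻ ω, (gwiX p ξ ε k ω i : ℝ≥0∞) ∂μ
        + ∫⁻ ω, (ε 1 ω t : ℝ≥0∞) ∂μ := by
  have hcoord : ∀ s : Fin p, Measurable fun v : Fin p → ℕ => (v s : ℝ≥0∞) :=
    fun s => measurable_from_nat.comp (measurable_pi_apply s)
  have hX : ∀ i, Measurable fun ω => gwiX p ξ ε k ω i := fun i =>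
    (measurable_pi_apply i).comp
      (measurable_gwiX (fun k _ j i => hξmeas k j i) fun k _ => hεmeas k)
  have hoffspring : ∀ i,
      ∫⁻ ω, ∑ j ∈ range (gwiX p ξ ε k ω i), (ξ (k + 1) (j + 1) i ω t : ℝ≥0∞) ∂μ
      = (∫⁻ ω, (ξ 1 1 i ω t : ℝ≥0∞) ∂μ) * ∫⁻ ω, (gwiX p ξ ε k ω i : ℝ≥0∞) ∂μ := fun i =>
    lintegral_sum_range_of_indepFun (hX i) (fun j => (hcoord t).comp (hξmeas _ _ _))
      (fun j => (indepFun_gwiX_offspring hξmeas hεmeas hindep k (j + 1) i).comp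
        (measurable_pi_apply i) (hcoord t))
      (fun j => ((hξid _ _ _).comp (hcoord t)).lintegral_eq)
  have himm : Measurable fun ω => (ε (k + 1) ω t : ℝ≥0∞) := (hcoord t).comp (hεmeas _)
  have hbranch : ∀ i, Measurable fun ω =>
      ∑ j ∈ range (gwiX p ξ ε k ω i), (ξ (k + 1) (j + 1) i ω t : ℝ≥0∞) := fun i =>
    (hX i).sum_range_of_measurable fun j => (hcoord t).comp (hξmeas _ _ _)
  have himm_id : ∫⁻ ω, (ε (k + 1) ω t : ℝ≥0∞) ∂μ = ∫⁻ ω, (ε 1 ω t : ℝ≥0∞) ∂μ :=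
    ((hεid _).comp (hcoord t)).lintegral_eq
  simp only [gwiX, Nat.cast_add, Nat.cast_sum]
  rw [lintegral_add_right _ himm, lintegral_finsetSum _ fun i _ => hbranch i, himm_id]
  simp only [hoffspring]

theorem integral_gwiX_eq_geom_sum_mulVec [MeasurableSpace Ω] {μ : Measure Ω}
    (hξmeas : ∀ k j i, Measurable (ξ k j i)) (hεmeas : ∀ k, Measurable (ε k))
    (hindep : iIndepFun (Sum.elim (fun q : ℕ × ℕ × Fin p => ξ q.1 q.2.1 q.2.2) ε) μ)
    (hξid : ∀ k j i, IdentDistrib (ξ k j i) (ξ 1 1 i) μ μ)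
    (hεid : ∀ k, IdentDistrib (ε k) (ε 1) μ μ)
    (hξint : ∀ i t, Integrable (fun ω => (ξ 1 1 i ω t : ℝ)) μ)
    (hεint : ∀ t, Integrable (fun ω => (ε 1 ω t : ℝ)) μ)
    {A : Matrix (Fin p) (Fin p) ℝ} (hA : ∀ t i, A t i = ∫ ω, (ξ 1 1 i ω t : ℝ) ∂μ)
    {b : Fin p → ℝ} (hb : ∀ t, b t = ∫ ω, (ε 1 ω t : ℝ) ∂μ) (k : ℕ) (t : Fin p) :
    ∫ ω, (gwiX p ξ ε k ω t : ℝ) ∂μ = ((∑ j ∈ range k, A ^ j) *ᵥ b) t := by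
  have hA0 : ∀ t i, 0 ≤ A t i := fun t i => hA t i ▸ integral_nonneg fun _ => Nat.cast_nonneg _
  have hb0 : ∀ t, 0 ≤ b t := fun t => hb t ▸ integral_nonneg fun _ => Nat.cast_nonneg _
  have hX : Measurable fun ω => gwiX p ξ ε k ω t := (measurable_pi_apply t).comp
    (measurable_gwiX (fun k _ j i => hξmeas k j i) fun k _ => hεmeas k)
  have hL := eq_ofReal_geom_sum_mulVec_of_rec hA0 hb0
    (L := fun k t => ∫⁻ ω, (gwiX p ξ ε k ω t : ℝ≥0∞) ∂μ) (fun t => by simp [gwiX])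
    (fun k t => by
      simp only [lintegral_gwiX_succ hξmeas hεmeas hindep hξid hεid, hA, hb,
        ofReal_integral_natCast (hξint _ _), ofReal_integral_natCast (hεint _)]) k t
  rw [integral_natCast_eq_toReal_lintegral hX, hL,
    ENNReal.toReal_ofReal (Matrix.geom_sum_mulVec_nonneg hA0 hb0 k t)]

end GWI

theorem abs_sum_choose_mul_sub_le {c : ℕ → ℝ} {d : ℕ} (hc : ∀ m, d < m → c m = 0) {k : ℕ}
    (hk : 1 ≤ k) :
    |∑ m ∈ range k, (k.choose (m + 1) : ℝ) * c m - c d * k.choose (d + 1)|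
      ≤ (∑ m ∈ range d, |c m|) * k ^ d := by
  have htrunc : ∑ m ∈ range k, (k.choose (m + 1) : ℝ) * c m
      = ∑ m ∈ range (d + 1), (k.choose (m + 1) : ℝ) * c m := by
    rcases le_total (d + 1) k with h | h
    · exact eventually_constant_sum (fun m hm => by rw [hc m hm, mul_zero]) h
    · refine (eventually_constant_sum (fun m hm => ?_) h).symm
      rw [Nat.choose_eq_zero_of_lt (by omega), Nat.cast_zero, zero_mul]
  have hchoose : ∀ m ∈ range d, (k.choose (m + 1) : ℝ) ≤ (k : ℝ) ^ d := fun m hm =>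
    calc (k.choose (m + 1) : ℝ) ≤ (k : ℝ) ^ (m + 1) := by exact_mod_cast Nat.choose_le_pow _ _
      _ ≤ (k : ℝ) ^ d := pow_le_pow_right₀ (by exact_mod_cast hk) (mem_range.mp hm)
  rw [htrunc, sum_range_succ, mul_comm (c d), add_sub_cancel_right, sum_mul]
  refine (abs_sum_le_sum_abs _ _).trans (sum_le_sum fun m hm => ?_)
  rw [abs_mul, Nat.abs_cast, mul_comm]
  exact mul_le_mul_of_nonneg_left (hchoose m hm) (abs_nonneg _)

/-- The index `r_i` of the paper; its 1-based index `1` is `0 : Fin p`. -/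
noncomputable def minPosIndex {p : ℕ} (b : Fin p → ℝ) (i : Fin p) : Fin p :=
  if h : (Finset.univ.filter fun q : Fin p => q ≤ i ∧ 0 < b q).Nonempty
  then (Finset.univ.filter fun q : Fin p => q ≤ i ∧ 0 < b q).min' h
  else ⟨0, i.pos⟩

theorem minPosIndex_le {p : ℕ} (b : Fin p → ℝ) (i : Fin p) : minPosIndex b i ≤ i := by
  unfold minPosIndex
  split_ifs with h
  · exact (mem_filter.mp (min'_mem _ h)).2.1
  · exact Nat.zero_le _

theorem not_pos_of_lt_minPosIndex {p : ℕ} {b : Fin p → ℝ} {i q : Fin p}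
    (hq : q < minPosIndex b i) : ¬ 0 < b q := by
  intro hpos
  have hqi : q ≤ i := hq.le.trans (minPosIndex_le b i)
  unfold minPosIndex at hq
  split_ifs at hq with h
  · exact (min'_le _ q (mem_filter.mpr ⟨mem_univ _, hqi, hpos⟩)).not_gt hq
  · exact h ⟨q, mem_filter.mpr ⟨mem_univ _, hqi, hpos⟩⟩

theorem gwi_mean_asymptotics_general {Ω : Type*} [MeasurableSpace Ω]
    (μ : Measure Ω)
    (p : ℕ) (ξ : ℕ → ℕ → Fin p → Ω → (Fin p → ℕ)) (ε : ℕ → Ω → (Fin p → ℕ))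
    (hξmeas : ∀ k j i, Measurable (ξ k j i)) (hεmeas : ∀ k, Measurable (ε k))
    (hindep : iIndepFun
      (Sum.elim (fun q : ℕ × ℕ × Fin p => ξ q.1 q.2.1 q.2.2) ε) μ)
    (hξid : ∀ k j i, IdentDistrib (ξ k j i) (ξ 1 1 i) μ μ)
    (hεid : ∀ k, IdentDistrib (ε k) (ε 1) μ μ)
    (hξ2 : ∀ i t, Integrable (fun ω => ((ξ 1 1 i ω t : ℕ) : ℝ) ^ 2) μ)
    (hε2 : ∀ t, Integrable (fun ω => ((ε 1 ω t : ℕ) : ℝ) ^ 2) μ)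
    (A : Matrix (Fin p) (Fin p) ℝ)
    (hA : ∀ t i, A t i = ∫ ω, ((ξ 1 1 i ω t : ℕ) : ℝ) ∂μ)
    (hlow : ∀ t i : Fin p, t < i → A t i = 0)
    (hdiag : ∀ i : Fin p, A i i = 1)
    (b : Fin p → ℝ) (hb : ∀ t, b t = ∫ ω, ((ε 1 ω t : ℕ) : ℝ) ∂μ)
    (r : Fin p → Fin p)
    (hr : ∀ i : Fin p,
      r i = if h : (Finset.univ.filter fun q : Fin p => q ≤ i ∧ 0 < b q).Nonempty
            then (Finset.univ.filter fun q : Fin p => q ≤ i ∧ 0 < b q).min' h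
            else ⟨0, i.pos⟩) :
    ∀ i : Fin p, ∃ C : ℝ, ∀ k : ℕ, 1 ≤ k →
      |(∫ ω, ((gwiX p ξ ε k ω i : ℕ) : ℝ) ∂μ)
          - b (r i) * ((A - 1) ^ ((i : ℕ) - (r i : ℕ))) i (r i)
            * (k.choose ((i : ℕ) - (r i : ℕ) + 1) : ℝ)|
        ≤ C * (k : ℝ) ^ ((i : ℕ) - (r i : ℕ)) := by
  intro i
  have hri : r i = minPosIndex b i := hr i
  have hb_zero : ∀ q < r i, b q = 0 := fun q hq =>
    le_antisymm (not_lt.mp (not_pos_of_lt_minPosIndex (hri ▸ hq)))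
      (hb q ▸ integral_nonneg fun _ => Nat.cast_nonneg _)
  have hnil : ∀ t j, t ≤ j → (A - 1) t j = 0 := fun _ _ =>
    Matrix.sub_one_apply_eq_zero_of_le_s15 hlow hdiag
  have hmean : ∀ k, ∫ ω, ((gwiX p ξ ε k ω i : ℕ) : ℝ) ∂μ
      = ∑ m ∈ range k, (k.choose (m + 1) : ℝ) * ((A - 1) ^ m *ᵥ b) i := fun k => by
    rw [integral_gwiX_eq_geom_sum_mulVec hξmeas hεmeas hindep hξid hεid
      (fun i t => integrable_natCast_of_integrable_sq
        ((measurable_pi_apply t).comp (hξmeas 1 1 i)) (hξ2 i t))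
      (fun t => integrable_natCast_of_integrable_sq
        ((measurable_pi_apply t).comp (hεmeas 1)) (hε2 t)) hA hb,
      Matrix.geom_sum_mulVec_apply_eq_sum_choose]
  refine ⟨∑ m ∈ range ((i : ℕ) - r i), |((A - 1) ^ m *ᵥ b) i|, fun k hk => ?_⟩
  have hbound := abs_sum_choose_mul_sub_le (c := fun m => ((A - 1) ^ m *ᵥ b) i)
    (d := (i : ℕ) - r i)
    (fun m hm => Matrix.pow_mulVec_apply_eq_zero hnil hb_zero (by omega)) hk
  rw [hmean, mul_comm (b (r i)), ← Matrix.pow_sub_mulVec_apply hnil hb_zero]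
  exact hbound

/-- For a strongly critical `p`-type GWI process with `X₀ = 0`, finite second
moments, lower triangular offspring mean matrix `A` with unit diagonal and positive
first-subdiagonal entries, with `r_i := (min{ r ≤ i : b_r > 0 }) ∨ 1`,
`E(X_{k,i}) = b_{r_i} ((A-I)^{i-r_i})_{i,r_i} C(k, i-r_i+1) + O(k^{i-r_i})`. -/
theorem gwi_mean_asymptotics {Ω : Type*} [MeasurableSpace Ω]
    (μ : Measure Ω) [IsProbabilityMeasure μ]
    (p : ℕ) (ξ : ℕ → ℕ → Fin p → Ω → (Fin p → ℕ)) (ε : ℕ → Ω → (Fin p → ℕ))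
    (hξmeas : ∀ k j i, Measurable (ξ k j i)) (hεmeas : ∀ k, Measurable (ε k))
    (hindep : iIndepFun
      (Sum.elim (fun q : ℕ × ℕ × Fin p => ξ q.1 q.2.1 q.2.2) ε) μ)
    (hξid : ∀ k j i, IdentDistrib (ξ k j i) (ξ 1 1 i) μ μ)
    (hεid : ∀ k, IdentDistrib (ε k) (ε 1) μ μ)
    (hξ2 : ∀ i t, Integrable (fun ω => ((ξ 1 1 i ω t : ℕ) : ℝ) ^ 2) μ)
    (hε2 : ∀ t, Integrable (fun ω => ((ε 1 ω t : ℕ) : ℝ) ^ 2) μ)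
    (A : Matrix (Fin p) (Fin p) ℝ)
    (hA : ∀ t i, A t i = ∫ ω, ((ξ 1 1 i ω t : ℕ) : ℝ) ∂μ)
    (hlow : ∀ t i : Fin p, t < i → A t i = 0)
    (hdiag : ∀ i : Fin p, A i i = 1)
    (hsub : ∀ (j : ℕ) (hj : j + 1 < p), 0 < A ⟨j + 1, hj⟩ ⟨j, Nat.lt_of_succ_lt hj⟩)
    (b : Fin p → ℝ) (hb : ∀ t, b t = ∫ ω, ((ε 1 ω t : ℕ) : ℝ) ∂μ)
    (r : Fin p → Fin p)
    (hr : ∀ i : Fin p,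
      r i = if h : (Finset.univ.filter fun q : Fin p => q ≤ i ∧ 0 < b q).Nonempty
            then (Finset.univ.filter fun q : Fin p => q ≤ i ∧ 0 < b q).min' h
            else ⟨0, i.pos⟩) :
    ∀ i : Fin p, ∃ C : ℝ, ∀ k : ℕ, 1 ≤ k →
      |(∫ ω, ((gwiX p ξ ε k ω i : ℕ) : ℝ) ∂μ)
          - b (r i) * ((A - 1) ^ ((i : ℕ) - (r i : ℕ))) i (r i)
            * (k.choose ((i : ℕ) - (r i : ℕ) + 1) : ℝ)|
        ≤ C * (k : ℝ) ^ ((i : ℕ) - (r i : ℕ)) :=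
  gwi_mean_asymptotics_general μ p ξ ε hξmeas hεmeas hindep hξid hεid hξ2 hε2 A hA hlow hdiag b hb r
    hr
end
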